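/- arXiv:1702.05705 — 3 statements merged into one kernel-verified Lean document; each statement's English description precedes it below -/
import Mathlib

section
/- Define φ: F_8 × F_8 → F_2 by φ(x,y) = tr(y·x^6). If x, y, z are nonzero elements of F_8 with x + y + z = 0, then φ(x,y) = φ(y,z) = φ(z,x). -/
open scoped Classical
noncomputable section

abbrev F8 := GaloisField 2 3

def tr (x : F8) : F8 := x + x ^ 2 + x ^ 4

def φ (x y : F8) : F8 := tr (y * x ^ 6)

/-!
On `F₈ˣ` we have `x⁶ = x⁻¹`, so `φ x y = tr (y / x)`. In characteristic 2 the relation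
`x + y + z = 0` says `z = x + y`, hence `φ y z = tr (x / y + 1) = tr (x / y) + 1`. So the claim
reduces to `tr u + tr u⁻¹ = 1` for `u ∉ {0, 1}`: since `u⁻¹ = u⁶`, `u¹² = u⁵` and `u²⁴ = u³`,
the left side is `u + u² + ⋯ + u⁶ = -1 = 1`, as `1 + u + ⋯ + u⁶ = 0` for a root `u ≠ 1` of
`u⁷ = 1`.
-/

open Finset

theorem pow_seven_eq_one {x : F8} (hx : x ≠ 0) : x ^ 7 = 1 := by
  have := Fintype.ofFinite F8
  have : Fintype.card F8 = 8 := by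
    rw [← Nat.card_eq_fintype_card, GaloisField.card 2 3 (by norm_num)]; norm_num
  simpa [this] using FiniteField.pow_card_sub_one_eq_one x hx

theorem inv_eq_pow_six {x : F8} (hx : x ≠ 0) : x⁻¹ = x ^ 6 :=
  inv_eq_of_mul_eq_one_right <| by rw [← pow_succ', pow_seven_eq_one hx]

theorem phi_eq_tr_div {x : F8} (hx : x ≠ 0) (y : F8) : φ x y = tr (y / x) := by
  rw [φ, div_eq_mul_inv, inv_eq_pow_six hx]

theorem tr_add (p q : F8) : tr (p + q) = tr p + tr q := by
  simp only [tr, show (4 : ℕ) = 2 ^ 2 from rfl, add_pow_char_pow, add_pow_char]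
  ring

theorem tr_one : tr 1 = 1 := by
  simp only [tr, one_pow, CharTwo.add_self_eq_zero, zero_add]

theorem geom_sum_eq_zero_of_pow_eq_one {R : Type*} [CommRing R] [IsDomain R] {u : R} {n : ℕ}
    (hn : u ^ n = 1) (hu : u ≠ 1) : ∑ i ∈ range n, u ^ i = 0 := by
  have := geom_sum_mul u n
  rw [hn, sub_self] at this
  exact (mul_eq_zero.1 this).resolve_right (sub_ne_zero.2 hu)

theorem tr_add_tr_inv {u : F8} (hu₀ : u ≠ 0) (hu₁ : u ≠ 1) : tr u + tr u⁻¹ = 1 := by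
  have h7 := pow_seven_eq_one hu₀
  have hsum := geom_sum_eq_zero_of_pow_eq_one h7 hu₁
  simp only [sum_range_succ, sum_range_zero] at hsum
  rw [inv_eq_pow_six hu₀, tr, tr]
  linear_combination hsum + (u ^ 17 + u ^ 10 + u ^ 5 + u ^ 3) * h7 - CharTwo.two_eq_zero (R := F8)

theorem phi_eq_phi_of_add_add_eq_zero {a b c : F8} (ha : a ≠ 0) (hb : b ≠ 0) (hc : c ≠ 0)
    (h : a + b + c = 0) : φ a b = φ b c := by
  have hc_eq : c = a + b := (CharTwo.add_eq_zero.1 h).symm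
  have hba : b / a ≠ 1 := fun h1 =>
    hc (by rw [hc_eq, (div_eq_one_iff_eq ha).1 h1, CharTwo.add_self_eq_zero])
  have htr := tr_add_tr_inv (div_ne_zero hb ha) hba
  rw [inv_div] at htr
  rw [phi_eq_tr_div ha, phi_eq_tr_div hb, hc_eq, add_div, div_self hb, tr_add, tr_one]
  exact (CharTwo.add_eq_iff_eq_add.1 htr).trans (add_comm _ _)

theorem phi_cyclic (x y z : F8) (hx : x ≠ 0) (hy : y ≠ 0) (hz : z ≠ 0)
    (h : x + y + z = 0) : φ x y = φ y z ∧ φ y z = φ z x :=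
  ⟨phi_eq_phi_of_add_add_eq_zero hx hy hz h,
    phi_eq_phi_of_add_add_eq_zero hy hz hx (by rw [← h]; ring)⟩
end
end

section
/- For z a nonzero element of F_8, let O_z be the set of 4-element subsets X of F_8 with Σ_{x∈X} x = z. Then O_z has exactly 8 elements and is a single orbit under the translation action of the additive group of F_8 (which acts freely on O_z). -/
/-!
Translating a 4-set by `w` adds `4 • w = 0` to its sum, so the additive group of `𝔽₈` acts
on `O_z`. A finite set fixed by a nonzero translation `w` splits into pairs `{x, w + x}`, so in
characteristic 2 a fixed 4-set has sum `2 • w = 0`; hence the action on `O_z` is free for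
`z ≠ 0`, and it is transitive as soon as `#O_z ≤ 8`. The count `#O_z = 8` is checked by
exhaustive computation in the isomorphic group `(ZMod 2)³`.
-/

open scoped Classical
noncomputable section

instance : Fintype F8 := Fintype.ofFinite F8

open Finset

section Translation

variable {A : Type*} [AddCommGroup A] [DecidableEq A]

theorem Finset.sum_image_add_left (X : Finset A) (w : A) :
    ∑ x ∈ X.image (w + ·), x = #X • w + ∑ x ∈ X, x := by
  rw [sum_image fun _ _ _ _ => add_left_cancel, sum_add_distrib, sum_const]

theorem Finset.image_add_left_image_add_left (X : Finset A) (v w : A) :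
    (X.image (w + ·)).image (v + ·) = X.image ((v + w) + ·) := by
  simp only [image_image, Function.comp_def, add_assoc]

theorem Finset.injective_image_add_left_of_free {X : Finset A}
    (hfree : ∀ w : A, X.image (w + ·) = X → w = 0) :
    Function.Injective fun w : A => X.image (w + ·) := by
  intro v w h
  have : X.image ((-w + v) + ·) = X := by
    simp only at h
    rw [← image_add_left_image_add_left, h, image_add_left_image_add_left, neg_add_cancel]
    simp only [zero_add, image_id']
  exact (neg_add_eq_zero.1 (hfree _ this)).symm

variable [Fintype A]

theorem Finset.exists_image_add_left_eq_of_free {T : Finset (Finset A)}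
    (hmaps : ∀ X ∈ T, ∀ w : A, X.image (w + ·) ∈ T)
    (hfree : ∀ X ∈ T, ∀ w : A, X.image (w + ·) = X → w = 0)
    (hcard : #T ≤ Fintype.card A) :
    ∀ X ∈ T, ∀ Y ∈ T, ∃ w : A, Y = X.image (w + ·) := by
  intro X hX Y hY
  obtain ⟨w, -, hw⟩ := surjOn_of_injOn_of_card_le (s := univ) (fun w => X.image (w + ·))
    (fun w _ => hmaps X hX w) (injective_image_add_left_of_free (hfree X hX)).injOn
    (by rwa [card_univ]) hY
  exact ⟨w, hw.symm⟩

end Translation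

section CharTwo

variable {R : Type*} [Ring R] [CharP R 2] [DecidableEq R]

theorem Finset.sum_eq_card_div_two_smul_of_add_mem {w : R} (hw : w ≠ 0) :
    ∀ X : Finset R, (∀ x ∈ X, w + x ∈ X) → ∑ x ∈ X, x = (#X / 2) • w := by
  intro X
  induction X using Finset.strongInduction with
  | H X ih =>
  intro hX
  rcases X.eq_empty_or_nonempty with rfl | ⟨x, hx⟩
  · simp
  have hww (y : R) : w + (w + y) = y := by rw [← add_assoc, CharTwo.add_self_eq_zero, zero_add]
  have hwx : w + x ≠ x := fun h => hw (by simpa using h)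
  set Y := (X.erase x).erase (w + x)
  have hwxY : w + x ∉ Y := notMem_erase _ _
  have hxY : x ∉ Y := fun h => notMem_erase x X (mem_of_mem_erase h)
  have hXY : X = insert x (insert (w + x) Y) := by
    rw [insert_erase (mem_erase.2 ⟨hwx, hX x hx⟩), insert_erase hx]
  have hY : ∀ y ∈ Y, w + y ∈ Y := by
    intro y hy
    obtain ⟨hyw, hyx, hyX⟩ : y ≠ w + x ∧ y ≠ x ∧ y ∈ X := by simpa [Y] using hy
    refine mem_erase.2 ⟨fun h => hyx (add_left_cancel h),
      mem_erase.2 ⟨fun h => hyw ?_, hX y hyX⟩⟩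
    rw [← h, hww]
  have hsum := ih Y ((erase_subset _ _).trans_ssubset (erase_ssubset hx)) hY
  have hxwx : x ∉ insert (w + x) Y := by simp [hwx.symm, hxY]
  calc ∑ x ∈ X, x = x + (w + x) + ∑ y ∈ Y, y := by
        rw [hXY, sum_insert hxwx, sum_insert hwxY, ← add_assoc]
    _ = (#Y / 2 + 1) • w := by
        rw [add_left_comm, CharTwo.add_self_eq_zero, add_zero, hsum, succ_nsmul']
    _ = (#X / 2) • w := by
        rw [hXY, card_insert_of_notMem hxwx, card_insert_of_notMem hwxY]
        congr 1
        omega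

theorem Finset.sum_image_add_left_of_even_card {X : Finset R} (hX : Even #X) (w : R) :
    ∑ x ∈ X.image (w + ·), x = ∑ x ∈ X, x := by
  obtain ⟨k, hk⟩ := hX
  rw [sum_image_add_left, hk, add_nsmul, CharTwo.add_self_eq_zero, zero_add]

theorem Finset.eq_zero_of_image_add_left_eq {X : Finset R} (hX : 4 ∣ #X)
    (hsum : ∑ x ∈ X, x ≠ 0) {w : R} (h : X.image (w + ·) = X) : w = 0 := by
  by_contra hw
  refine hsum ?_
  rw [sum_eq_card_div_two_smul_of_add_mem hw X fun x hx => h ▸ mem_image_of_mem _ hx]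
  obtain ⟨k, hk⟩ := hX
  rw [show #X / 2 = k + k by omega, add_nsmul, CharTwo.add_self_eq_zero]

end CharTwo

def subsetsWithCardSum (A : Type*) [AddCommMonoid A] [Fintype A] [DecidableEq A] (n : ℕ) (z : A) :
    Finset (Finset A) :=
  univ.filter fun X => #X = n ∧ ∑ x ∈ X, x = z

section SubsetsWithCardSum

variable {A B : Type*} [Fintype A] [DecidableEq A] [Fintype B] [DecidableEq B]

theorem mem_subsetsWithCardSum [AddCommMonoid A] {n : ℕ} {z : A} {X : Finset A} :
    X ∈ subsetsWithCardSum A n z ↔ #X = n ∧ ∑ x ∈ X, x = z := by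
  simp [subsetsWithCardSum]

theorem card_subsetsWithCardSum_addEquiv [AddCommMonoid A] [AddCommMonoid B] (e : A ≃+ B)
    (n : ℕ) (z : A) : #(subsetsWithCardSum B n (e z)) = #(subsetsWithCardSum A n z) := by
  refine (card_equiv e.toEquiv.finsetCongr fun X => ?_).symm
  simp only [Equiv.finsetCongr_apply, mem_subsetsWithCardSum, card_map, sum_map]
  rw [← e.injective.eq_iff, map_sum]
  rfl

theorem image_add_left_mem_subsetsWithCardSum {R : Type*} [Ring R] [CharP R 2] [Fintype R]
    [DecidableEq R] {n : ℕ} (hn : Even n) {z : R} {X : Finset R}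
    (hX : X ∈ subsetsWithCardSum R n z) (w : R) :
    X.image (w + ·) ∈ subsetsWithCardSum R n z := by
  rw [mem_subsetsWithCardSum] at hX ⊢
  rw [card_image_of_injective _ (add_right_injective w),
    sum_image_add_left_of_even_card (hX.1 ▸ hn)]
  exact hX

end SubsetsWithCardSum

theorem card_subsetsWithCardSum_four_of_ne_zero :
    ∀ z : Fin 3 → ZMod 2, z ≠ 0 → #(subsetsWithCardSum _ 4 z) = 8 := by
  decide

def GaloisField.linearEquivFinFun (p : ℕ) [Fact p.Prime] {n : ℕ} (h : n ≠ 0) :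
    GaloisField p n ≃ₗ[ZMod p] (Fin n → ZMod p) :=
  LinearEquiv.ofFinrankEq _ _ (by rw [GaloisField.finrank p h, Module.finrank_fin_fun])

theorem card_F8 : Fintype.card F8 = 8 :=
  Fintype.card_eq_nat_card.trans (GaloisField.card 2 3 (by norm_num))

theorem card_subsetsWithCardSum_F8 {z : F8} (hz : z ≠ 0) : #(subsetsWithCardSum F8 4 z) = 8 := by
  let e := (GaloisField.linearEquivFinFun 2 (n := 3) (by norm_num)).toAddEquiv
  rw [← card_subsetsWithCardSum_addEquiv e]
  exact card_subsetsWithCardSum_four_of_ne_zero _ (e.map_ne_zero_iff.2 hz)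

theorem outer_sets_orbit (z : F8) (hz : z ≠ 0) :
    let Oz : Finset (Finset F8) :=
      Finset.univ.filter (fun X => X.card = 4 ∧ ∑ x ∈ X, x = z)
    Oz.card = 8 ∧
    (∀ X ∈ Oz, ∀ w : F8, X.image (fun x => w + x) ∈ Oz) ∧
    (∀ X ∈ Oz, ∀ Y ∈ Oz, ∃ w : F8, Y = X.image (fun x => w + x)) ∧
    (∀ X ∈ Oz, ∀ w : F8, X.image (fun x => w + x) = X → w = 0) := by
  intro Oz
  have hcard : #Oz = 8 := card_subsetsWithCardSum_F8 hz
  have hmaps : ∀ X ∈ Oz, ∀ w : F8, X.image (w + ·) ∈ Oz := fun X hX =>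
    image_add_left_mem_subsetsWithCardSum (by decide) hX
  have hfree : ∀ X ∈ Oz, ∀ w : F8, X.image (w + ·) = X → w = 0 := by
    intro X hX _
    obtain ⟨hcardX, hsumX⟩ := mem_subsetsWithCardSum.1 hX
    exact eq_zero_of_image_add_left_eq (hcardX ▸ dvd_rfl) (hsumX ▸ hz)
  have htrans := exists_image_add_left_eq_of_free hmaps hfree (by rw [hcard, card_F8])
  exact ⟨hcard, hmaps, htrans, hfree⟩
end
end

section
/- Let z be a nonzero element of F_8 and let X, Y be 4-element subsets of F_8 with Σ_{x∈X} x = Σ_{y∈Y} y = z, such that Y ≠ X and Y ≠ F_8 ∖ X. Then |X ∩ Y| = 2, and the symmetric difference X Δ Y is a 4-element set that is either a line containing 0 and z (i.e., of the form {0, a, b, a+b} with z ∈ {a,b,a+b}) or the complement of such a line. -/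
/-! In characteristic two a symmetric difference is summed by adding the two sums, so
`∑ (X ∆ Y) = z + z = 0`, and `#(X ∆ Y) = 8 - 2 #(X ∩ Y)`. No two distinct elements sum to `0`, and
`∑ F₈ = 0`, so neither `X ∆ Y` nor its complement has two elements; this forces `#(X ∩ Y) = 2`.
Of the 4-sets `X ∆ Y` and its complement, the one containing `0` sums to `0`, hence is a line
`L = {0, a, b, a + b}`. Since `L` has index two in `F₈`, any two points on the same side of `L`
add up to a point of `L`; writing `z = ∑ (X \ Y) + ∑ (X ∩ Y)` with `X \ Y ⊆ X ∆ Y` and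
`X ∩ Y` disjoint from it shows `z ∈ L`. -/

open scoped Classical
noncomputable section

open Finset

theorem Finset.sum_compl_eq_zero {M : Type*} [AddCommMonoid M] [Fintype M]
    (huniv : ∑ x : M, x = 0) {S : Finset M} (hS : ∑ x ∈ S, x = 0) : ∑ x ∈ Sᶜ, x = 0 := by
  simpa [hS, huniv] using sum_compl_add_sum S id

theorem Finset.card_symmDiff_add_two_mul_card_inter {α : Type*} (s t : Finset α) :
    #(symmDiff s t) + 2 * #(s ∩ t) = #s + #t := by
  have h : #((s ∪ t) \ (s ∩ t)) + #(s ∩ t) = #(s ∪ t) :=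
    card_sdiff_add_card_eq_card inter_subset_union
  rw [symmDiff_eq_sup_sdiff_inf, ← card_union_add_card_inter]
  change #((s ∪ t) \ (s ∩ t)) + 2 * #(s ∩ t) = _
  omega

section ElementaryAbelian

variable {G : Type*} [AddCommGroup G] [Module (ZMod 2) G]

theorem ZModModule.add_eq_zero_iff_eq {u v : G} : u + v = 0 ↔ u = v := by
  rw [add_eq_zero_iff_eq_neg, ZModModule.neg_eq_self]

theorem Finset.sum_ne_zero_of_card_eq_two {P : Finset G} (hP : #P = 2) : ∑ x ∈ P, x ≠ 0 := by
  obtain ⟨u, v, huv, rfl⟩ := card_eq_two.mp hP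
  rwa [sum_pair huv, Ne, ZModModule.add_eq_zero_iff_eq]

theorem Finset.sum_symmDiff (s t : Finset G) :
    ∑ x ∈ symmDiff s t, x = ∑ x ∈ s, x + ∑ x ∈ t, x := by
  have h : ∑ x ∈ (s ∪ t) \ (s ∩ t), x + ∑ x ∈ s ∩ t, x = ∑ x ∈ s ∪ t, x :=
    sum_sdiff inter_subset_union
  rw [symmDiff_eq_sup_sdiff_inf, ← sum_union_inter, ← h, add_assoc, ZModModule.add_self, add_zero]
  rfl

theorem linearIndependent_pair_of_ne {a b : G} (ha : a ≠ 0) (hb : b ≠ 0) (hab : a ≠ b) :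
    LinearIndependent (ZMod 2) ![a, b] := by
  rw [linearIndependent_fin2]
  refine ⟨hb, fun r => ?_⟩
  fin_cases r
  · show (0 : ZMod 2) • b ≠ a
    simpa using ha.symm
  · show (1 : ZMod 2) • b ≠ a
    simpa using hab.symm

def line (a b : G) : Finset G := {0, a, b, a + b}

theorem add_mem_line {a b x y : G} (hx : x ∈ line a b) (hy : y ∈ line a b) :
    x + y ∈ line a b := by
  simp only [line, mem_insert, mem_singleton] at *
  rcases hx with rfl | rfl | rfl | rfl <;> rcases hy with rfl | rfl | rfl | rfl <;>
    simp [ZModModule.add_self, add_comm, add_left_comm]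

theorem exists_eq_line {S : Finset G} (h0 : 0 ∈ S) (hS : #S = 4) (hsum : ∑ x ∈ S, x = 0) :
    ∃ a b : G, LinearIndependent (ZMod 2) ![a, b] ∧ S = line a b := by
  obtain ⟨a, b, c, hab, hac, hbc, hE⟩ : ∃ a b c, a ≠ b ∧ a ≠ c ∧ b ≠ c ∧ S.erase 0 = {a, b, c} :=
    card_eq_three.mp (by rw [card_erase_of_mem h0, hS])
  have hne : ∀ x ∈ ({a, b, c} : Finset G), x ≠ 0 := fun x hx => ne_of_mem_erase (hE ▸ hx)
  have hS : S = insert 0 {a, b, c} := by rw [← hE, insert_erase h0]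
  have hc : c = a + b := by
    rw [hS, sum_insert (by simpa using fun h => hne 0 h rfl), sum_insert (by simp [hab, hac]),
      sum_pair hbc, zero_add, ← add_assoc, ZModModule.add_eq_zero_iff_eq] at hsum
    exact hsum.symm
  refine ⟨a, b, linearIndependent_pair_of_ne (hne a (by simp)) (hne b (by simp)) hab, ?_⟩
  rw [hS, hc]; rfl

end ElementaryAbelian

section Finite

variable {G : Type*} [AddCommGroup G] [Module (ZMod 2) G] [Fintype G]

theorem add_mem_of_notMem_of_notMem {L : Finset G} (hadd : ∀ x ∈ L, ∀ y ∈ L, x + y ∈ L)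
    (hcard : 2 * #L = Fintype.card G) {u v : G} (hu : u ∉ L) (hv : v ∉ L) : u + v ∈ L := by
  have htranslate : L.image (u + ·) = Lᶜ := by
    refine eq_of_subset_of_card_le (fun w hw => ?_) ?_
    · obtain ⟨x, hx, rfl⟩ := mem_image.mp hw
      refine mem_compl.mpr fun hux => hu ?_
      simpa [add_assoc, ZModModule.add_self] using hadd _ hux _ hx
    · rw [card_compl, card_image_of_injective _ (add_right_injective u)]
      omega
  obtain ⟨x, hx, rfl⟩ := mem_image.mp (htranslate ▸ mem_compl.mpr hv)
  rwa [← add_assoc, ZModModule.add_self, zero_add]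

theorem sum_mem_of_card_eq_two {L P : Finset G} (hadd : ∀ x ∈ L, ∀ y ∈ L, x + y ∈ L)
    (hcard : 2 * #L = Fintype.card G) (hP : #P = 2) (hside : P ⊆ L ∨ P ⊆ Lᶜ) :
    ∑ x ∈ P, x ∈ L := by
  obtain ⟨u, v, huv, rfl⟩ := card_eq_two.mp hP
  rw [sum_pair huv]
  rcases hside with h | h
  · exact hadd u (h (by simp)) v (h (by simp))
  · exact add_mem_of_notMem_of_notMem hadd hcard (mem_compl.mp (h (by simp)))
      (mem_compl.mp (h (by simp)))

theorem card_inter_eq_two (hG : Fintype.card G = 8) (huniv : ∑ x : G, x = 0) {X Y : Finset G}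
    (hX : #X = 4) (hY : #Y = 4) (hsum : ∑ x ∈ X, x = ∑ y ∈ Y, y) (hne : Y ≠ X) (hnc : Y ≠ Xᶜ) :
    #(X ∩ Y) = 2 := by
  have hΔsum : ∑ x ∈ symmDiff X Y, x = 0 := by rw [sum_symmDiff, hsum, ZModModule.add_self]
  have hΔcard := card_symmDiff_add_two_mul_card_inter X Y
  have hT_le : #(X ∩ Y) ≤ 4 := hX ▸ card_le_card inter_subset_left
  have hT_ne_four : #(X ∩ Y) ≠ 4 := fun h =>
    hne ((eq_of_subset_of_card_le inter_subset_right (by omega)).symm.trans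
      (eq_of_subset_of_card_le inter_subset_left (by omega)))
  have hT_ne_zero : #(X ∩ Y) ≠ 0 := fun h =>
    hnc (eq_of_subset_of_card_le
      (subset_compl_iff_disjoint_left.mpr (disjoint_iff_inter_eq_empty.mpr (card_eq_zero.mp h)))
      (by rw [card_compl]; omega))
  have hT_ne_three : #(X ∩ Y) ≠ 3 := fun h =>
    sum_ne_zero_of_card_eq_two (by omega) hΔsum
  have hT_ne_one : #(X ∩ Y) ≠ 1 := fun h =>
    sum_ne_zero_of_card_eq_two (by rw [card_compl]; omega) (sum_compl_eq_zero huniv hΔsum)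
  omega

theorem exists_line_eq_or_eq_compl (hG : Fintype.card G = 8) (huniv : ∑ x : G, x = 0)
    {S : Finset G} (hS : #S = 4) (hsum : ∑ x ∈ S, x = 0) :
    ∃ a b : G, LinearIndependent (ZMod 2) ![a, b] ∧ (S = line a b ∨ S = (line a b)ᶜ) := by
  by_cases h0 : 0 ∈ S
  · obtain ⟨a, b, hab, hL⟩ := exists_eq_line h0 hS hsum
    exact ⟨a, b, hab, Or.inl hL⟩
  · obtain ⟨a, b, hab, hL⟩ := exists_eq_line (mem_compl.mpr h0) (by rw [card_compl]; omega)
      (sum_compl_eq_zero huniv hsum)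
    exact ⟨a, b, hab, Or.inr (eq_compl_comm.mpr hL.symm)⟩

theorem sum_mem_of_symmDiff_eq {X Y L : Finset G} (hadd : ∀ x ∈ L, ∀ y ∈ L, x + y ∈ L)
    (hcard : 2 * #L = Fintype.card G) (hX : #X = 4) (hT : #(X ∩ Y) = 2)
    (hΔ : symmDiff X Y = L ∨ symmDiff X Y = Lᶜ) : ∑ x ∈ X, x ∈ L := by
  have hA : X \ Y ⊆ symmDiff X Y := fun x hx => mem_symmDiff.mpr (Or.inl (mem_sdiff.mp hx))
  have hT' : X ∩ Y ⊆ (symmDiff X Y)ᶜ := fun x hx => by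
    simp only [mem_compl, mem_symmDiff, mem_inter] at hx ⊢
    tauto
  have hAcard : #(X \ Y) = 2 := by have := card_sdiff_add_card_inter X Y; omega
  rw [← sdiff_union_inter X Y, sum_union (disjoint_sdiff_inter X Y)]
  refine hadd _ (sum_mem_of_card_eq_two hadd hcard hAcard ?_) _
    (sum_mem_of_card_eq_two hadd hcard hT ?_)
  · rcases hΔ with h | h
    · exact Or.inl (h ▸ hA)
    · exact Or.inr (h ▸ hA)
  · rcases hΔ with h | h
    · exact Or.inr (h ▸ hT')
    · exact Or.inl (compl_compl L ▸ h ▸ hT')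

end Finite

theorem sum_univ_F8 : ∑ x : F8, x = 0 := by
  simpa using FiniteField.sum_pow_lt_card_sub_one (K := F8) 1 (by rw [card_F8]; norm_num)

theorem symmDiff_of_outer_sets_general (z : F8) (X Y : Finset F8)
    (hXc : X.card = 4) (hYc : Y.card = 4)
    (hXs : ∑ x ∈ X, x = z) (hYs : ∑ y ∈ Y, y = z)
    (hne : Y ≠ X) (hnc : Y ≠ Xᶜ) :
    (X ∩ Y).card = 2 ∧
    ∃ a b : F8, LinearIndependent (ZMod 2) ![a, b] ∧
      z ∈ ({0, a, b, a + b} : Finset F8) ∧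
      (symmDiff X Y = {0, a, b, a + b} ∨
        symmDiff X Y = ({0, a, b, a + b} : Finset F8)ᶜ) := by
  have hT := card_inter_eq_two card_F8 sum_univ_F8 hXc hYc (hXs.trans hYs.symm) hne hnc
  have hΔcard : #(symmDiff X Y) = 4 := by
    have := card_symmDiff_add_two_mul_card_inter X Y
    omega
  have hΔsum : ∑ x ∈ symmDiff X Y, x = 0 := by rw [sum_symmDiff, hXs, hYs, ZModModule.add_self]
  obtain ⟨a, b, hab, hΔ⟩ := exists_line_eq_or_eq_compl card_F8 sum_univ_F8 hΔcard hΔsum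
  have hLcard : 2 * #(line a b) = Fintype.card F8 := by
    rcases hΔ with h | h
    · rw [← h, hΔcard, card_F8]
    · rw [← compl_compl (line a b), ← h, card_compl, hΔcard, card_F8]
  refine ⟨hT, a, b, hab, ?_, hΔ⟩
  exact hXs ▸ sum_mem_of_symmDiff_eq (fun x hx y hy => add_mem_line hx hy) hLcard hXc hT hΔ

theorem symmDiff_of_outer_sets (z : F8) (hz : z ≠ 0) (X Y : Finset F8)
    (hXc : X.card = 4) (hYc : Y.card = 4)
    (hXs : ∑ x ∈ X, x = z) (hYs : ∑ y ∈ Y, y = z)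
    (hne : Y ≠ X) (hnc : Y ≠ Xᶜ) :
    (X ∩ Y).card = 2 ∧
    ∃ a b : F8, LinearIndependent (ZMod 2) ![a, b] ∧
      z ∈ ({0, a, b, a + b} : Finset F8) ∧
      (symmDiff X Y = {0, a, b, a + b} ∨
        symmDiff X Y = ({0, a, b, a + b} : Finset F8)ᶜ) :=
  symmDiff_of_outer_sets_general z X Y hXc hYc hXs hYs hne hnc
end
end
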